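/- arXiv:2511.06243 — 9 statements merged into one kernel-verified Lean document; each statement's English description precedes it below -/
import Mathlib

section
/- Let γ ≥ 0 and let f, F : ℝ → ℝ be everywhere positive functions, both differentiable at a point a ∈ ℝ. Suppose that for all a₁, a₂ ∈ ℝ, exp(−γ·|a₁ − a₂|) ≤ (f(a₂)·F(a₁)) / (f(a₁)·F(a₂)) ≤ exp(γ·|a₁ − a₂|). Then F′(a)/F(a) − γ ≤ f′(a)/f(a) ≤ F′(a)/F(a) + γ. -/
/-!
Taking logarithms, the sensitivity model says exactly that `x ↦ log f x - log F x` is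
`γ`-Lipschitz. Its derivative at `a` is the difference of the scores `f'/f - F'/F`, and the
derivative of a `γ`-Lipschitz function has absolute value at most `γ`.
-/

open Real Filter

lemma abs_log_le_of_exp_neg_le_of_le_exp {r c : ℝ} (hr : 0 < r) (hlo : exp (-c) ≤ r)
    (hhi : r ≤ exp c) : |log r| ≤ c :=
  abs_le.mpr ⟨(le_log_iff_exp_le hr).mpr hlo, (log_le_iff_le_exp hr).mpr hhi⟩

lemma log_odds_ratio {f F : ℝ → ℝ} (hf : ∀ x, 0 < f x) (hF : ∀ x, 0 < F x) (a₁ a₂ : ℝ) :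
    log (f a₂ * F a₁ / (f a₁ * F a₂)) =
      (log (f a₂) - log (F a₂)) - (log (f a₁) - log (F a₁)) := by
  rw [log_div (mul_pos (hf a₂) (hF a₁)).ne' (mul_pos (hf a₁) (hF a₂)).ne',
    log_mul (hf a₂).ne' (hF a₁).ne', log_mul (hf a₁).ne' (hF a₂).ne']
  ring

lemma abs_log_ratio_sub_le_of_odds_ratio_bound {γ : ℝ} {f F : ℝ → ℝ}
    (hf : ∀ x, 0 < f x) (hF : ∀ x, 0 < F x)
    (hmodel : ∀ a₁ a₂ : ℝ,
      exp (-(γ * |a₁ - a₂|)) ≤ f a₂ * F a₁ / (f a₁ * F a₂) ∧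
      f a₂ * F a₁ / (f a₁ * F a₂) ≤ exp (γ * |a₁ - a₂|)) (a₁ a₂ : ℝ) :
    |(log (f a₂) - log (F a₂)) - (log (f a₁) - log (F a₁))| ≤ γ * |a₂ - a₁| := by
  have hodds : 0 < f a₂ * F a₁ / (f a₁ * F a₂) :=
    div_pos (mul_pos (hf a₂) (hF a₁)) (mul_pos (hf a₁) (hF a₂))
  rw [← log_odds_ratio hf hF, abs_sub_comm a₂ a₁]
  exact abs_log_le_of_exp_neg_le_of_le_exp hodds (hmodel a₁ a₂).1 (hmodel a₁ a₂).2

/-- Under the marginal γ sensitivity model bounding the odds ratio of the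
latent density `f` against the observed density `F` at any two dose levels by
`exp (±γ|a₁ - a₂|)`, the latent score `f'/f` lies within `γ` of the observed score `F'/F`. -/
theorem marginal_sensitivity_score_bound
    (γ : ℝ) (hγ : 0 ≤ γ) (f F : ℝ → ℝ)
    (hf : ∀ x, 0 < f x) (hF : ∀ x, 0 < F x) (a : ℝ)
    (hfd : DifferentiableAt ℝ f a) (hFd : DifferentiableAt ℝ F a)
    (hmodel : ∀ a₁ a₂ : ℝ,
      Real.exp (-(γ * |a₁ - a₂|)) ≤ f a₂ * F a₁ / (f a₁ * F a₂) ∧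
      f a₂ * F a₁ / (f a₁ * F a₂) ≤ Real.exp (γ * |a₁ - a₂|)) :
    deriv F a / F a - γ ≤ deriv f a / f a ∧
      deriv f a / f a ≤ deriv F a / F a + γ := by
  have hderiv : HasDerivAt (fun x => log (f x) - log (F x))
      (deriv f a / f a - deriv F a / F a) a :=
    (hfd.hasDerivAt.log (hf a).ne').sub (hFd.hasDerivAt.log (hF a).ne')
  have hscore := hderiv.le_of_lip' hγ <| Eventually.of_forall fun x =>
    abs_log_ratio_sub_le_of_odds_ratio_bound hf hF hmodel a x
  rw [norm_eq_abs, abs_le] at hscore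
  constructor <;> linarith [hscore.1, hscore.2]
end

section
/- Let (Ω, ℱ, P) be a probability space, Y : Ω → ℝ an integrable random variable, and m ∈ ℝ with P(Y > m) = 1/2 and P(Y < m) = 1/2. Fix s₀ ∈ ℝ and γ ≥ 0. Let 𝒮 be the set of real numbers E[−S·Y] as S ranges over all measurable functions S : Ω → ℝ with s₀ − γ ≤ S ≤ s₀ + γ almost surely and E[S] = s₀. Then E[−s₀·Y] + γ·E[Y·(𝟙{Y > m} − 𝟙{Y < m})] is the greatest element of 𝒮: it is an upper bound for 𝒮, and it is attained by the feasible choice S* = s₀ − γ on {Y > m} and S* = s₀ + γ on {Y ≤ m}. -/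
open MeasureTheory

/-!
Write `E[-S⬝Y] = E[-s₀⬝Y] + E[(s₀ - S)(Y - m)]`, which holds because `E[s₀ - S] = 0`. Since
`|s₀ - S| ≤ γ`, the last term is at most `γ⬝E|Y - m|`, with equality when
`s₀ - S = γ⬝sign(Y - m)`, which is the score `S*`; it has mean `s₀` because `P(Y > m) = 1/2`.
Finally `E[Y⬝(𝟙{Y > m} - 𝟙{Y < m})] = E|Y - m|`, as `P(Y > m) = P(Y < m)`.
-/

theorem sub_mul_ite_sub_ite_eq_abs (m y : ℝ) :
    (y - m) * ((if m < y then 1 else 0) - (if y < m then 1 else 0)) = |y - m| := by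
  rcases lt_trichotomy m y with h | rfl | h
  · simp [h, h.not_gt, abs_of_pos (sub_pos.2 h)]
  · simp
  · simp [h, h.not_gt, abs_of_neg (sub_neg.2 h)]

theorem sub_sub_ite_mul_sub_eq_mul_abs (s₀ γ m y : ℝ) :
    (s₀ - if m < y then s₀ - γ else s₀ + γ) * (y - m) = γ * |y - m| := by
  split_ifs with h
  · rw [abs_of_pos (sub_pos.2 h)]; ring
  · rw [abs_of_nonpos (sub_nonpos.2 (not_lt.1 h))]; ring

section

variable {Ω : Type*} [MeasurableSpace Ω] {μ : Measure Ω}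

theorem integral_ite_one_zero {p : Ω → Prop} [DecidablePred p] (hp : MeasurableSet {ω | p ω}) :
    ∫ ω, (if p ω then (1 : ℝ) else 0) ∂μ = μ.real {ω | p ω} := by
  rw [← integral_indicator_one hp]
  congr 1 with ω
  simp [Set.indicator_apply]

theorem integrable_ite_one_zero [IsFiniteMeasure μ] {p : Ω → Prop} [DecidablePred p]
    (hp : MeasurableSet {ω | p ω}) : Integrable (fun ω => if p ω then (1 : ℝ) else 0) μ :=
  .of_bound (Measurable.ite hp measurable_const measurable_const).aestronglyMeasurable 1
    (ae_of_all _ fun ω => by split_ifs <;> norm_num)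

theorem integral_ite_one_sub_ite_one_eq_zero [IsFiniteMeasure μ] {p q : Ω → Prop}
    [DecidablePred p] [DecidablePred q] (hp : MeasurableSet {ω | p ω})
    (hq : MeasurableSet {ω | q ω}) (hpq : μ {ω | p ω} = μ {ω | q ω}) :
    ∫ ω, ((if p ω then (1 : ℝ) else 0) - (if q ω then 1 else 0)) ∂μ = 0 := by
  rw [integral_sub (integrable_ite_one_zero hp) (integrable_ite_one_zero hq),
    integral_ite_one_zero hp, integral_ite_one_zero hq, measureReal_def, measureReal_def, hpq,
    sub_self]

theorem integral_mul_ite_sub_ite_eq_integral_abs_sub [IsFiniteMeasure μ] {Y : Ω → ℝ}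
    (hYm : Measurable Y) (hY : Integrable Y μ) {m : ℝ} (hm : μ {ω | m < Y ω} = μ {ω | Y ω < m}) :
    ∫ ω, Y ω * ((if m < Y ω then (1 : ℝ) else 0) - (if Y ω < m then 1 else 0)) ∂μ =
      ∫ ω, |Y ω - m| ∂μ := by
  have hgt : MeasurableSet {ω | m < Y ω} := measurableSet_lt measurable_const hYm
  have hlt : MeasurableSet {ω | Y ω < m} := measurableSet_lt hYm measurable_const
  have hD := (integrable_ite_one_zero (μ := μ) hgt).sub' (integrable_ite_one_zero hlt)
  have h : ∀ ω, Y ω * ((if m < Y ω then (1 : ℝ) else 0) - (if Y ω < m then 1 else 0)) =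
      |Y ω - m| + m * ((if m < Y ω then 1 else 0) - (if Y ω < m then 1 else 0)) := fun ω => by
    rw [← sub_mul_ite_sub_ite_eq_abs]; ring
  simp_rw [h]
  rw [integral_add (hY.sub' (integrable_const m)).abs (hD.const_mul m), integral_const_mul,
    integral_ite_one_sub_ite_one_eq_zero hgt hlt hm, mul_zero, add_zero]

theorem integral_mul_le_mul_integral_abs {T Z : Ω → ℝ} {γ : ℝ} (hT : AEStronglyMeasurable T μ)
    (hT_bound : ∀ᵐ ω ∂μ, |T ω| ≤ γ) (hZ : Integrable Z μ) :
    ∫ ω, T ω * Z ω ∂μ ≤ γ * ∫ ω, |Z ω| ∂μ := by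
  rw [← integral_const_mul]
  refine integral_mono_ae (hZ.bdd_mul hT hT_bound) (hZ.abs.const_mul γ) ?_
  filter_upwards [hT_bound] with ω hω
  calc T ω * Z ω ≤ |T ω| * |Z ω| := by rw [← abs_mul]; exact le_abs_self _
    _ ≤ γ * |Z ω| := by gcongr

variable [IsProbabilityMeasure μ] {S Y : Ω → ℝ} {s₀ γ : ℝ}

theorem integral_neg_mul_eq_add_integral_sub_mul (hS : AEStronglyMeasurable S μ)
    (hS_bound : ∀ᵐ ω ∂μ, |s₀ - S ω| ≤ γ) (hS_mean : ∫ ω, S ω ∂μ = s₀)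
    (hY : Integrable Y μ) (c : ℝ) :
    ∫ ω, -(S ω * Y ω) ∂μ = ∫ ω, -(s₀ * Y ω) ∂μ + ∫ ω, (s₀ - S ω) * (Y ω - c) ∂μ := by
  have hT : Integrable (fun ω => s₀ - S ω) μ :=
    .of_bound (aestronglyMeasurable_const.sub hS) γ hS_bound
  have hTY : Integrable (fun ω => (s₀ - S ω) * (Y ω - c)) μ :=
    (hY.sub (integrable_const c)).bdd_mul hT.1 hS_bound
  have hT_mean : ∫ ω, (s₀ - S ω) ∂μ = 0 := by
    have hS_int : Integrable S μ :=
      ((integrable_const s₀).sub' hT).congr (ae_of_all _ fun ω => sub_sub_cancel s₀ (S ω))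
    rw [integral_sub (integrable_const s₀) hS_int, hS_mean]
    simp
  calc ∫ ω, -(S ω * Y ω) ∂μ
      = ∫ ω, (-(s₀ * Y ω) + (s₀ - S ω) * (Y ω - c)) + c * (s₀ - S ω) ∂μ := by
        congr 1; ext ω; ring
    _ = ∫ ω, -(s₀ * Y ω) ∂μ + ∫ ω, (s₀ - S ω) * (Y ω - c) ∂μ + c * ∫ ω, (s₀ - S ω) ∂μ := by
        have hs₀Y : Integrable (fun ω => -(s₀ * Y ω)) μ := (hY.const_mul s₀).fun_neg
        rw [integral_add (hs₀Y.fun_add hTY) (hT.const_mul c), integral_add hs₀Y hTY,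
          integral_const_mul]
    _ = _ := by rw [hT_mean, mul_zero, add_zero]

theorem integral_ite_const {p : Ω → Prop} [DecidablePred p] (hp : MeasurableSet {ω | p ω})
    (a b : ℝ) :
    ∫ ω, (if p ω then a else b) ∂μ = μ.real {ω | p ω} * a + (1 - μ.real {ω | p ω}) * b := by
  have h : ∀ ω, (if p ω then a else b) = b + (a - b) * (if p ω then 1 else 0) := fun ω => by
    split_ifs <;> ring
  simp_rw [h]
  rw [integral_add (integrable_const b) ((integrable_ite_one_zero hp).const_mul _),
    integral_const_mul, integral_ite_one_zero hp, integral_const, probReal_univ, one_smul]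
  ring

end

/-- maximization half of Proposition 1 (continuous outcome, single stratum).
Among all measurable scores `S` with `s₀ - γ ≤ S ≤ s₀ + γ` a.s. and `E[S] = s₀`, the
quantity `E[-S⬝Y]` is maximized at the value
`E[-s₀⬝Y] + γ⬝E[Y⬝(𝟙{Y > m} - 𝟙{Y < m})]`, attained by the choice
`S* = s₀ - γ` on `{Y > m}` and `S* = s₀ + γ` on `{Y ≤ m}`. -/
theorem ade_upper_bound_continuous_outcome
    {Ω : Type*} [MeasurableSpace Ω] (P : Measure Ω) [IsProbabilityMeasure P]
    (Y : Ω → ℝ) (hYm : Measurable Y) (hY : Integrable Y P) (m : ℝ)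
    (hgt : P {ω | m < Y ω} = 1/2) (hlt : P {ω | Y ω < m} = 1/2)
    (s₀ γ : ℝ) (hγ : 0 ≤ γ) :
    IsGreatest
      {v : ℝ | ∃ S : Ω → ℝ, Measurable S ∧
        (∀ᵐ ω ∂P, s₀ - γ ≤ S ω ∧ S ω ≤ s₀ + γ) ∧
        (∫ ω, S ω ∂P = s₀) ∧
        v = ∫ ω, -(S ω * Y ω) ∂P}
      ((∫ ω, -(s₀ * Y ω) ∂P) +
        γ * ∫ ω, Y ω * ((if m < Y ω then (1:ℝ) else 0) - (if Y ω < m then (1:ℝ) else 0)) ∂P)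
    ∧
    (Measurable (fun ω => if m < Y ω then s₀ - γ else s₀ + γ) ∧
      (∀ᵐ ω ∂P, s₀ - γ ≤ (if m < Y ω then s₀ - γ else s₀ + γ) ∧
        (if m < Y ω then s₀ - γ else s₀ + γ) ≤ s₀ + γ) ∧
      (∫ ω, (if m < Y ω then s₀ - γ else s₀ + γ) ∂P = s₀) ∧
      (∫ ω, -((if m < Y ω then s₀ - γ else s₀ + γ) * Y ω) ∂P =
        (∫ ω, -(s₀ * Y ω) ∂P) +
          γ * ∫ ω, Y ω * ((if m < Y ω then (1:ℝ) else 0) - (if Y ω < m then (1:ℝ) else 0)) ∂P)) := by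
  have hgt_meas : MeasurableSet {ω | m < Y ω} := measurableSet_lt measurable_const hYm
  rw [integral_mul_ite_sub_ite_eq_integral_abs_sub hYm hY (hgt.trans hlt.symm)]
  have hSstar_meas : Measurable fun ω => if m < Y ω then s₀ - γ else s₀ + γ :=
    Measurable.ite hgt_meas measurable_const measurable_const
  have hSstar_bound (ω : Ω) : |s₀ - if m < Y ω then s₀ - γ else s₀ + γ| ≤ γ := by
    split_ifs <;> simp [abs_of_nonneg hγ]
  have hSstar_mean : ∫ ω, (if m < Y ω then s₀ - γ else s₀ + γ) ∂P = s₀ := by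
    rw [integral_ite_const hgt_meas, measureReal_def, hgt]
    norm_num
    ring
  have hSstar_value : ∫ ω, -((if m < Y ω then s₀ - γ else s₀ + γ) * Y ω) ∂P =
      ∫ ω, -(s₀ * Y ω) ∂P + γ * ∫ ω, |Y ω - m| ∂P := by
    rw [integral_neg_mul_eq_add_integral_sub_mul hSstar_meas.aestronglyMeasurable
      (ae_of_all _ hSstar_bound) hSstar_mean hY m]
    simp_rw [sub_sub_ite_mul_sub_eq_mul_abs, integral_const_mul]
  have hSstar_mem : ∀ᵐ ω ∂P, s₀ - γ ≤ (if m < Y ω then s₀ - γ else s₀ + γ) ∧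
      (if m < Y ω then s₀ - γ else s₀ + γ) ≤ s₀ + γ :=
    ae_of_all _ fun ω => Set.mem_Icc_iff_abs_le.1 (hSstar_bound ω)
  refine ⟨⟨⟨_, hSstar_meas, hSstar_mem, hSstar_mean, hSstar_value.symm⟩, ?_⟩,
    hSstar_meas, hSstar_mem, hSstar_mean, hSstar_value⟩
  rintro _ ⟨S, hS, hS_mem, hS_mean, rfl⟩
  have hS_bound : ∀ᵐ ω ∂P, |s₀ - S ω| ≤ γ := hS_mem.mono fun ω h => Set.mem_Icc_iff_abs_le.2 h
  rw [integral_neg_mul_eq_add_integral_sub_mul hS.aestronglyMeasurable hS_bound hS_mean hY m]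
  gcongr
  exact integral_mul_le_mul_integral_abs (by fun_prop) hS_bound (hY.sub' (integrable_const m))
end

section
/- Let (Ω, ℱ, P) be a probability space, Y : Ω → ℝ an integrable random variable, and m ∈ ℝ with P(Y > m) = 1/2 and P(Y < m) = 1/2. Fix s₀ ∈ ℝ and γ ≥ 0. Let 𝒮 be the set of real numbers E[−S·Y] as S ranges over all measurable functions S : Ω → ℝ with s₀ − γ ≤ S ≤ s₀ + γ almost surely and E[S] = s₀. Then E[−s₀·Y] − γ·E[Y·(𝟙{Y > m} − 𝟙{Y < m})] is the least element of 𝒮: it is a lower bound for 𝒮, and it is attained by the feasible choice S* = s₀ + γ on {Y > m} and S* = s₀ − γ on {Y ≤ m}. -/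
open MeasureTheory

/-! Write `σ := 𝟙{Y > m} - 𝟙{Y < m}`, the sign of `Y - m`, so that `(Y - m) σ = |Y - m|`, and
`E[σ] = P(Y > m) - P(Y < m) = 0`. For a feasible `S`, the perturbation `T = S - s₀` has mean zero
and `|T| ≤ γ`, hence `E[T Y] = E[T (Y - m)] ≤ γ E|Y - m| = γ E[(Y - m) σ] = γ E[Y σ]`.
Equality holds for `T = γ σ`, which is `S* - s₀` off the null event `{Y = m}`. -/

/-- `sign (y - m)`, spelled with `if`s so that the integrand of the main theorem is
definitionally `Y ω * signAbout m (Y ω)`. -/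
noncomputable def signAbout (m y : ℝ) : ℝ := (if m < y then 1 else 0) - (if y < m then 1 else 0)

section signAbout

variable {Ω : Type*} [MeasurableSpace Ω] {P : Measure Ω} {Y : Ω → ℝ} {m : ℝ}

lemma sub_mul_signAbout (m y : ℝ) : (y - m) * signAbout m y = |y - m| := by
  rcases lt_trichotomy m y with h | rfl | h
  · simp [signAbout, h, h.not_gt, abs_of_pos (sub_pos.2 h)]
  · simp [signAbout]
  · simp [signAbout, h, h.not_gt, abs_of_neg (sub_neg.2 h)]

lemma abs_signAbout_le_one (m y : ℝ) : |signAbout m y| ≤ 1 := by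
  unfold signAbout; split_ifs <;> norm_num

lemma ite_eq_add_mul_signAbout {y : ℝ} (h : y ≠ m) (s₀ γ : ℝ) :
    (if m < y then s₀ + γ else s₀ - γ) = s₀ + γ * signAbout m y := by
  rcases h.lt_or_gt with h | h
  · simp [signAbout, h, h.not_gt]; ring
  · simp [signAbout, h, h.not_gt]

lemma Measurable.signAbout (hYm : Measurable Y) (m : ℝ) :
    Measurable fun ω => signAbout m (Y ω) :=
  (Measurable.ite (measurableSet_lt measurable_const hYm) measurable_const measurable_const).sub
    (Measurable.ite (measurableSet_lt hYm measurable_const) measurable_const measurable_const)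

lemma integrable_signAbout [IsFiniteMeasure P] (hYm : Measurable Y) (m : ℝ) :
    Integrable (fun ω => signAbout m (Y ω)) P :=
  (integrable_const 1).mono' (hYm.signAbout m).aestronglyMeasurable
    (ae_of_all _ fun ω => abs_signAbout_le_one m (Y ω))

lemma integral_signAbout_eq_zero [IsFiniteMeasure P] (hYm : Measurable Y)
    (hbal : P {ω | m < Y ω} = P {ω | Y ω < m}) :
    ∫ ω, signAbout m (Y ω) ∂P = 0 := by
  have hgt : MeasurableSet {ω | m < Y ω} := measurableSet_lt measurable_const hYm
  have hlt : MeasurableSet {ω | Y ω < m} := measurableSet_lt hYm measurable_const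
  have hind : (fun ω => signAbout m (Y ω)) =
      fun ω => {ω | m < Y ω}.indicator 1 ω - {ω | Y ω < m}.indicator 1 ω := by
    funext ω; simp [signAbout, Set.indicator_apply]
  rw [hind, integral_sub ((integrable_const 1).indicator hgt) ((integrable_const 1).indicator hlt),
    integral_indicator_one hgt, integral_indicator_one hlt, measureReal_def, measureReal_def, hbal,
    sub_self]

lemma integral_add_mul_signAbout [IsProbabilityMeasure P] (hYm : Measurable Y)
    (hbal : P {ω | m < Y ω} = P {ω | Y ω < m}) (s₀ γ : ℝ) :
    ∫ ω, (s₀ + γ * signAbout m (Y ω)) ∂P = s₀ := by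
  rw [integral_add (integrable_const s₀) ((integrable_signAbout hYm m).const_mul γ),
    integral_const_mul, integral_signAbout_eq_zero hYm hbal, integral_const, probReal_univ,
    one_smul, mul_zero, add_zero]

lemma MeasureTheory.Integrable.mul_signAbout [IsFiniteMeasure P] (hYm : Measurable Y)
    (hY : Integrable Y P) (m : ℝ) : Integrable (fun ω => Y ω * signAbout m (Y ω)) P :=
  hY.mul_bdd (hYm.signAbout m).aestronglyMeasurable
    (ae_of_all _ fun ω => abs_signAbout_le_one m (Y ω))

lemma integral_neg_add_mul_signAbout_mul [IsFiniteMeasure P] (hYm : Measurable Y)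
    (hY : Integrable Y P) (s₀ γ : ℝ) :
    ∫ ω, -((s₀ + γ * signAbout m (Y ω)) * Y ω) ∂P =
      ∫ ω, -(s₀ * Y ω) ∂P - γ * ∫ ω, Y ω * signAbout m (Y ω) ∂P := by
  have hs₀Y : Integrable (fun ω => -(s₀ * Y ω)) P := (hY.const_mul s₀).neg
  rw [← integral_const_mul, ← integral_sub hs₀Y ((hY.mul_signAbout hYm m).const_mul γ)]
  congr 1; funext ω; ring

lemma integral_mul_signAbout [IsFiniteMeasure P] (hYm : Measurable Y) (hY : Integrable Y P)
    (hbal : P {ω | m < Y ω} = P {ω | Y ω < m}) :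
    ∫ ω, Y ω * signAbout m (Y ω) ∂P = ∫ ω, |Y ω - m| ∂P := by
  have hpt : ∀ ω, Y ω * signAbout m (Y ω) = |Y ω - m| + m * signAbout m (Y ω) := fun ω => by
    rw [← sub_mul_signAbout]; ring
  have habs : Integrable (fun ω => |Y ω - m|) P := (hY.sub (integrable_const m)).abs
  simp_rw [hpt]
  rw [integral_add habs ((integrable_signAbout hYm m).const_mul m),
    integral_const_mul, integral_signAbout_eq_zero hYm hbal, mul_zero, add_zero]

lemma ae_ne_of_measure_gt_add_measure_lt [IsProbabilityMeasure P] (hYm : Measurable Y)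
    (h : P {ω | m < Y ω} + P {ω | Y ω < m} = 1) : ∀ᵐ ω ∂P, Y ω ≠ m := by
  have hunion : {ω | Y ω ≠ m} = {ω | m < Y ω} ∪ {ω | Y ω < m} := by
    ext ω; exact ne_iff_lt_or_gt.trans or_comm
  have hdisj : Disjoint {ω | m < Y ω} {ω | Y ω < m} :=
    Set.disjoint_left.2 fun _ (h₁ : m < _) h₂ => lt_asymm h₁ h₂
  rw [ae_iff_measure_eq (p := fun ω => Y ω ≠ m)
      (measurableSet_eq_fun hYm measurable_const).compl.nullMeasurableSet,
    hunion, measure_union hdisj (measurableSet_lt hYm measurable_const), h, measure_univ]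

lemma integral_mul_le_of_integral_eq_zero [IsFiniteMeasure P] {T : Ω → ℝ} {γ : ℝ}
    (hT : AEStronglyMeasurable T P) (hTγ : ∀ᵐ ω ∂P, |T ω| ≤ γ) (hT0 : ∫ ω, T ω ∂P = 0)
    (hY : Integrable Y P) (c : ℝ) :
    ∫ ω, T ω * Y ω ∂P ≤ γ * ∫ ω, |Y ω - c| ∂P := by
  have hTint : Integrable T P := (integrable_const γ).mono' hT hTγ
  have hYc : Integrable (fun ω => Y ω - c) P := hY.sub (integrable_const c)
  calc ∫ ω, T ω * Y ω ∂P = ∫ ω, T ω * (Y ω - c) ∂P := by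
        simp_rw [mul_sub]
        rw [integral_sub (hY.bdd_mul hT hTγ) (hTint.mul_const c), integral_mul_const, hT0,
          zero_mul, sub_zero]
    _ ≤ ∫ ω, γ * |Y ω - c| ∂P := by
        refine integral_mono_ae (hYc.bdd_mul hT hTγ) (hYc.abs.const_mul γ) ?_
        filter_upwards [hTγ] with ω h
        calc T ω * (Y ω - c) ≤ |T ω| * |Y ω - c| := (le_abs_self _).trans (abs_mul _ _).le
          _ ≤ γ * |Y ω - c| := mul_le_mul_of_nonneg_right h (abs_nonneg _)
    _ = γ * ∫ ω, |Y ω - c| ∂P := integral_const_mul γ _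

lemma integral_mul_le_of_abs_sub_le [IsProbabilityMeasure P] {S : Ω → ℝ} {s₀ γ : ℝ}
    (hS : AEStronglyMeasurable S P) (hSγ : ∀ᵐ ω ∂P, |S ω - s₀| ≤ γ)
    (hmean : ∫ ω, S ω ∂P = s₀) (hY : Integrable Y P) (c : ℝ) :
    ∫ ω, S ω * Y ω ∂P ≤ s₀ * ∫ ω, Y ω ∂P + γ * ∫ ω, |Y ω - c| ∂P := by
  have hT : AEStronglyMeasurable (fun ω => S ω - s₀) P := hS.sub aestronglyMeasurable_const
  have hTint : Integrable (fun ω => S ω - s₀) P := (integrable_const γ).mono' hT hSγ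
  have hSint : Integrable S P :=
    (hTint.add (integrable_const s₀)).congr (ae_of_all _ fun ω => sub_add_cancel (S ω) s₀)
  have hT0 : ∫ ω, (S ω - s₀) ∂P = 0 := by
    rw [integral_sub hSint (integrable_const s₀), hmean, integral_const, probReal_univ,
      one_smul, sub_self]
  have hsplit : ∫ ω, S ω * Y ω ∂P = ∫ ω, (S ω - s₀) * Y ω ∂P + s₀ * ∫ ω, Y ω ∂P := by
    rw [← integral_const_mul, ← integral_add (hY.bdd_mul hT hSγ) (hY.const_mul s₀)]
    congr 1; funext ω; ring
  linarith [integral_mul_le_of_integral_eq_zero hT hSγ hT0 hY c]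

end signAbout

/-- minimization half of Proposition 1 (continuous outcome, single stratum).
Among all measurable scores `S` with `s₀ - γ ≤ S ≤ s₀ + γ` a.s. and `E[S] = s₀`, the
quantity `E[-S⬝Y]` is minimized at the value
`E[-s₀⬝Y] - γ⬝E[Y⬝(𝟙{Y > m} - 𝟙{Y < m})]`, attained by the choice
`S* = s₀ + γ` on `{Y > m}` and `S* = s₀ - γ` on `{Y ≤ m}`. -/
theorem ade_lower_bound_continuous_outcome
    {Ω : Type*} [MeasurableSpace Ω] (P : Measure Ω) [IsProbabilityMeasure P]
    (Y : Ω → ℝ) (hYm : Measurable Y) (hY : Integrable Y P) (m : ℝ)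
    (hgt : P {ω | m < Y ω} = 1/2) (hlt : P {ω | Y ω < m} = 1/2)
    (s₀ γ : ℝ) (hγ : 0 ≤ γ) :
    IsLeast
      {v : ℝ | ∃ S : Ω → ℝ, Measurable S ∧
        (∀ᵐ ω ∂P, s₀ - γ ≤ S ω ∧ S ω ≤ s₀ + γ) ∧
        (∫ ω, S ω ∂P = s₀) ∧
        v = ∫ ω, -(S ω * Y ω) ∂P}
      ((∫ ω, -(s₀ * Y ω) ∂P) -
        γ * ∫ ω, Y ω * ((if m < Y ω then (1:ℝ) else 0) - (if Y ω < m then (1:ℝ) else 0)) ∂P)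
    ∧
    (Measurable (fun ω => if m < Y ω then s₀ + γ else s₀ - γ) ∧
      (∀ᵐ ω ∂P, s₀ - γ ≤ (if m < Y ω then s₀ + γ else s₀ - γ) ∧
        (if m < Y ω then s₀ + γ else s₀ - γ) ≤ s₀ + γ) ∧
      (∫ ω, (if m < Y ω then s₀ + γ else s₀ - γ) ∂P = s₀) ∧
      (∫ ω, -((if m < Y ω then s₀ + γ else s₀ - γ) * Y ω) ∂P =
        (∫ ω, -(s₀ * Y ω) ∂P) -
          γ * ∫ ω, Y ω * ((if m < Y ω then (1:ℝ) else 0) - (if Y ω < m then (1:ℝ) else 0)) ∂P)) := by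
  have hbal : P {ω | m < Y ω} = P {ω | Y ω < m} := hgt.trans hlt.symm
  have hSstar : ∀ᵐ ω ∂P, (if m < Y ω then s₀ + γ else s₀ - γ) = s₀ + γ * signAbout m (Y ω) :=
    (ae_ne_of_measure_gt_add_measure_lt hYm (by rw [hgt, hlt, ENNReal.add_halves])).mono
      fun ω h => ite_eq_add_mul_signAbout h s₀ γ
  have hmeas : Measurable fun ω => if m < Y ω then s₀ + γ else s₀ - γ :=
    Measurable.ite (measurableSet_lt measurable_const hYm) measurable_const measurable_const
  have hbounds : ∀ᵐ ω ∂P, s₀ - γ ≤ (if m < Y ω then s₀ + γ else s₀ - γ) ∧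
      (if m < Y ω then s₀ + γ else s₀ - γ) ≤ s₀ + γ :=
    ae_of_all _ fun ω => by split_ifs <;> constructor <;> linarith
  have hmean : ∫ ω, (if m < Y ω then s₀ + γ else s₀ - γ) ∂P = s₀ :=
    (integral_congr_ae hSstar).trans (integral_add_mul_signAbout hYm hbal s₀ γ)
  have hvalue : ∫ ω, -((if m < Y ω then s₀ + γ else s₀ - γ) * Y ω) ∂P =
      ∫ ω, -(s₀ * Y ω) ∂P - γ * ∫ ω, Y ω * signAbout m (Y ω) ∂P :=
    (integral_congr_ae (hSstar.mono fun ω h => by simp only [h])).trans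
      (integral_neg_add_mul_signAbout_mul hYm hY s₀ γ)
  refine ⟨⟨⟨_, hmeas, hbounds, hmean, hvalue.symm⟩, ?_⟩, hmeas, hbounds, hmean, hvalue⟩
  rintro _ ⟨S, hS, hSγ, hSmean, rfl⟩
  have hSγ' : ∀ᵐ ω ∂P, |S ω - s₀| ≤ γ :=
    hSγ.mono fun ω h => abs_sub_le_iff.2 ⟨by linarith, by linarith⟩
  have hle := integral_mul_le_of_abs_sub_le hS.aestronglyMeasurable hSγ' hSmean hY m
  change _ - γ * ∫ ω, Y ω * signAbout m (Y ω) ∂P ≤ _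
  rw [integral_mul_signAbout hYm hY hbal, integral_neg, integral_neg, integral_const_mul]
  linarith
end

section
/- Let (Ω, ℱ, P) be a probability space and let Y : Ω → ℝ be a random variable taking values in {0, 1} almost surely, with p := P(Y = 1). Fix s₀ ∈ ℝ and γ ≥ 0. Let 𝒮 be the set of real numbers E[−S·Y] as S ranges over all measurable functions S : Ω → ℝ with s₀ − γ ≤ S ≤ s₀ + γ almost surely and E[S] = s₀. Then −s₀·p + γ·(1/2 − |p − 1/2|) is the greatest element of 𝒮 (equivalently, the greatest element is E[−s₀·Y] + γ·min(p, 1 − p)). -/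
/-!
With `A = {Y = 1}` and `p = P(A)`, the objective is `E[-S⬝Y] = -∫_A S`. The pointwise lower bound
gives `∫_A S ≥ (s₀ - γ) p`, while the upper bound on `Aᶜ` together with `E[S] = s₀` gives
`∫_A S = s₀ - ∫_{Aᶜ} S ≥ s₀ p - γ (1 - p)`; hence `-∫_A S ≤ -s₀ p + γ min(p, 1 - p)`.
Equality holds for the score that is `s₀ - γ m / p` on `A` and `s₀ + γ m / (1 - p)` off `A`,
where `m = min(p, 1 - p)`: both shifts are at most `γ`, and they move the same mass `γ m`,
so the mean stays `s₀`.
-/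

open MeasureTheory

lemma half_sub_abs_sub_half (p : ℝ) : 1 / 2 - |p - 1 / 2| = min p (1 - p) := by
  rcases le_total p (1 / 2) with h | h
  · rw [abs_of_nonpos (by linarith), min_eq_left (by linarith)]; ring
  · rw [abs_of_nonneg (by linarith), min_eq_right (by linarith)]; ring

lemma mul_min_div_le {γ x : ℝ} (y : ℝ) (hγ : 0 ≤ γ) (hx : 0 ≤ x) : γ * min x y / x ≤ γ :=
  div_le_of_le_mul₀ hx hγ (mul_le_mul_of_nonneg_left (min_le_left x y) hγ)

lemma integral_mul_eq_setIntegral_of_ae_zero_or_one {Ω : Type*} [MeasurableSpace Ω]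
    {P : Measure Ω} {Y : Ω → ℝ} (hYm : Measurable Y) (hbin : ∀ᵐ ω ∂P, Y ω = 0 ∨ Y ω = 1)
    (S : Ω → ℝ) : ∫ ω, S ω * Y ω ∂P = ∫ ω in {ω | Y ω = 1}, S ω ∂P := by
  have hA : MeasurableSet {ω | Y ω = 1} := hYm (measurableSet_singleton 1)
  rw [← integral_indicator hA]
  refine integral_congr_ae ?_
  filter_upwards [hbin] with ω hω
  rcases hω with h | h <;> simp [Set.indicator, h]

section Score

variable {Ω : Type*} [MeasurableSpace Ω] {P : Measure Ω} [IsProbabilityMeasure P]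
  {A : Set Ω} {S : Ω → ℝ} {s₀ γ : ℝ}

lemma le_setIntegral_of_ae_mem_band_of_integral_eq (hA : MeasurableSet A)
    (hS : Integrable S P) (hband : ∀ᵐ ω ∂P, s₀ - γ ≤ S ω ∧ S ω ≤ s₀ + γ)
    (hmean : ∫ ω, S ω ∂P = s₀) :
    s₀ * P.real A - γ * min (P.real A) (1 - P.real A) ≤ ∫ ω in A, S ω ∂P := by
  have hlower : (s₀ - γ) * P.real A ≤ ∫ ω in A, S ω ∂P := by
    calc (s₀ - γ) * P.real A = ∫ _ in A, (s₀ - γ) ∂P := by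
          rw [setIntegral_const, smul_eq_mul, mul_comm]
      _ ≤ ∫ ω in A, S ω ∂P :=
          setIntegral_mono_ae (integrable_const _).integrableOn hS.integrableOn
            (hband.mono fun _ h => h.1)
  have hupper : ∫ ω in Aᶜ, S ω ∂P ≤ (s₀ + γ) * (1 - P.real A) := by
    calc ∫ ω in Aᶜ, S ω ∂P ≤ ∫ _ in Aᶜ, (s₀ + γ) ∂P :=
          setIntegral_mono_ae hS.integrableOn (integrable_const _).integrableOn
            (hband.mono fun _ h => h.2)
      _ = (s₀ + γ) * (1 - P.real A) := by
          rw [setIntegral_const, smul_eq_mul, probReal_compl_eq_one_sub hA, mul_comm]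
  have hsplit : ∫ ω in A, S ω ∂P + ∫ ω in Aᶜ, S ω ∂P = s₀ := by
    rw [integral_add_compl hA hS, hmean]
  rcases min_choice (P.real A) (1 - P.real A) with hm | hm <;> rw [hm] <;> nlinarith

lemma exists_score_setIntegral_eq (hA : MeasurableSet A) (hγ : 0 ≤ γ) :
    ∃ S : Ω → ℝ, Measurable S ∧ (∀ ω, s₀ - γ ≤ S ω ∧ S ω ≤ s₀ + γ) ∧ ∫ ω, S ω ∂P = s₀ ∧
      ∫ ω in A, S ω ∂P = s₀ * P.real A - γ * min (P.real A) (1 - P.real A) := by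
  classical
  set q := P.real A
  have hq0 : 0 ≤ q := measureReal_nonneg
  have hq1 : 0 ≤ 1 - q := sub_nonneg.2 measureReal_le_one
  set t := γ * min q (1 - q)
  have ht0 : 0 ≤ t := mul_nonneg hγ (le_min hq0 hq1)
  have haγ : t / q ≤ γ := mul_min_div_le _ hγ hq0
  have hbγ : t / (1 - q) ≤ γ := by
    simpa only [t, min_comm] using mul_min_div_le q hγ hq1
  -- if `q = 0` or `1 - q = 0` then `t = 0`, so the junk value `t / 0 = 0` is harmless
  have hta : t / q * q = t := div_mul_cancel_of_imp fun h => by simp [t, h]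
  have htb : t / (1 - q) * (1 - q) = t := div_mul_cancel_of_imp fun h => by simp [t, h, hq0]
  refine ⟨A.piecewise (fun _ => s₀ - t / q) (fun _ => s₀ + t / (1 - q)),
    measurable_const.piecewise hA measurable_const, fun ω => ?_, ?_, ?_⟩
  · by_cases hω : ω ∈ A
    · simp only [Set.piecewise_eq_of_mem _ _ _ hω]
      constructor <;> linarith [div_nonneg ht0 hq0]
    · simp only [Set.piecewise_eq_of_notMem _ _ _ hω]
      constructor <;> linarith [div_nonneg ht0 hq1]
  · rw [integral_piecewise hA (integrable_const _).integrableOn (integrable_const _).integrableOn,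
      setIntegral_const, setIntegral_const, probReal_compl_eq_one_sub hA, smul_eq_mul,
      smul_eq_mul]
    linear_combination htb - hta
  · rw [setIntegral_congr_fun hA (g := fun _ => s₀ - t / q)
        fun _ hω => Set.piecewise_eq_of_mem _ _ _ hω, setIntegral_const, smul_eq_mul]
    linear_combination -hta

end Score

/-- maximization half of Proposition 2 (binary outcome, single stratum).
For a binary outcome `Y` with `p = P(Y = 1)`, among all measurable scores `S` with
`s₀ - γ ≤ S ≤ s₀ + γ` a.s. and `E[S] = s₀`, the greatest value of `E[-S⬝Y]` is
`-s₀⬝p + γ⬝(1/2 - |p - 1/2|)`. -/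
theorem ade_upper_bound_binary_outcome
    {Ω : Type*} [MeasurableSpace Ω] (P : Measure Ω) [IsProbabilityMeasure P]
    (Y : Ω → ℝ) (hYm : Measurable Y)
    (hbin : ∀ᵐ ω ∂P, Y ω = 0 ∨ Y ω = 1)
    (p : ℝ) (hp : p = (P {ω | Y ω = 1}).toReal)
    (s₀ γ : ℝ) (hγ : 0 ≤ γ) :
    IsGreatest
      {v : ℝ | ∃ S : Ω → ℝ, Measurable S ∧
        (∀ᵐ ω ∂P, s₀ - γ ≤ S ω ∧ S ω ≤ s₀ + γ) ∧
        (∫ ω, S ω ∂P = s₀) ∧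
        v = ∫ ω, -(S ω * Y ω) ∂P}
      (-(s₀ * p) + γ * (1/2 - |p - 1/2|)) := by
  have hA : MeasurableSet {ω | Y ω = 1} := hYm (measurableSet_singleton 1)
  have hobj : ∀ S : Ω → ℝ, ∫ ω, -(S ω * Y ω) ∂P = -∫ ω in {ω | Y ω = 1}, S ω ∂P := fun S => by
    rw [integral_neg, integral_mul_eq_setIntegral_of_ae_zero_or_one hYm hbin]
  rw [half_sub_abs_sub_half, hp, ← measureReal_def]
  constructor
  · obtain ⟨S, hSm, hband, hmean, hA_int⟩ := exists_score_setIntegral_eq (P := P) (s₀ := s₀) hA hγ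
    exact ⟨S, hSm, Filter.Eventually.of_forall hband, hmean, by rw [hobj, hA_int]; ring⟩
  · rintro v ⟨S, hSm, hband, hmean, rfl⟩
    have hS : Integrable S P := .of_mem_Icc (s₀ - γ) (s₀ + γ) hSm.aemeasurable hband
    rw [hobj]
    linarith [le_setIntegral_of_ae_mem_band_of_integral_eq hA hS hband hmean]
end

section
/- Let ν be a probability measure on a measurable space β, let C ≥ 0, and let κ be a Markov kernel from β to ℝ such that for every b ∈ β and all reals x ≤ y, κ(b)(Ioo x y) ≤ C·(y − x) (i.e., each κ(b) has a Lebesgue density bounded by C and no point masses). Let h, g : β → ℝ be measurable with g − h square-integrable with respect to ν. Then the measure, under the joint law ν ⊗ κ on β × ℝ, of the event {(b, a) : h(b) < a < g(b)} is at most C·∫ |h(b) − g(b)| dν(b), which in turn is at most C·(∫ (h(b) − g(b))² dν(b))^{1/2}. -/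
open MeasureTheory ProbabilityTheory Set

/-!
Disintegrating `ν ⊗ κ` over `β`, the event is `Ioo (h b) (g b)` on each fibre, whose `κ b`-measure is
at most `C * |h b - g b|`; integrating gives the first bound. The second is Cauchy–Schwarz for
the probability measure `ν`, here read off from the nonnegativity of the variance of `|h - g|`.
-/

lemma integral_abs_le_integral_sq_rpow_half {Ω : Type*} [MeasurableSpace Ω] {μ : Measure Ω}
    [IsProbabilityMeasure μ] {f : Ω → ℝ} (hf : MemLp f 2 μ) :
    ∫ ω, |f ω| ∂μ ≤ (∫ ω, f ω ^ 2 ∂μ) ^ (1 / 2 : ℝ) := by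
  have hvar := variance_nonneg |f| μ
  rw [variance_eq_sub hf.abs] at hvar
  simp only [Pi.pow_apply, Pi.abs_apply, sq_abs, sub_nonneg] at hvar
  rw [← Real.sqrt_eq_rpow]
  exact Real.le_sqrt_of_sq_le hvar

lemma measure_Ioo_le_ofReal_mul_abs {μ : Measure ℝ} {C : ℝ}
    (hμ : ∀ x y : ℝ, x ≤ y → μ (Ioo x y) ≤ ENNReal.ofReal (C * (y - x))) (x y : ℝ) :
    μ (Ioo x y) ≤ ENNReal.ofReal (C * |x - y|) := by
  rcases le_or_gt x y with hxy | hyx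
  · rw [abs_sub_comm, abs_of_nonneg (sub_nonneg.mpr hxy)]
    exact hμ x y hxy
  · simp [Ioo_eq_empty hyx.not_gt]

lemma compProd_setOf_between_le_lintegral {β : Type*} [MeasurableSpace β] (ν : Measure β)
    [SFinite ν] {κ : Kernel β ℝ} [IsSFiniteKernel κ] {C : ℝ}
    (hκ : ∀ b : β, ∀ x y : ℝ, x ≤ y → κ b (Ioo x y) ≤ ENNReal.ofReal (C * (y - x)))
    {h g : β → ℝ} (hh : Measurable h) (hg : Measurable g) :
    (ν.compProd κ) {p : β × ℝ | h p.1 < p.2 ∧ p.2 < g p.1} ≤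
      ∫⁻ b, ENNReal.ofReal (C * |h b - g b|) ∂ν := by
  have hs : MeasurableSet {p : β × ℝ | h p.1 < p.2 ∧ p.2 < g p.1} :=
    (measurableSet_lt (hh.comp measurable_fst) measurable_snd).inter
      (measurableSet_lt measurable_snd (hg.comp measurable_fst))
  rw [Measure.compProd_apply hs]
  exact lintegral_mono fun b => measure_Ioo_le_ofReal_mul_abs (hκ b) (h b) (g b)

/-- indicator L² lemma, Lemma 7 of the appendix: if the conditional
distribution `κ b` of `A` given `B = b` satisfies `κ b (Ioo x y) ≤ C⬝(y - x)` (density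
bounded by `C`, no point masses), then the joint probability of `{h(B) < A < g(B)}` is at
most `C⬝∫ |h - g| dν ≤ C⬝‖h - g‖_{L²(ν)}`. -/
theorem indicator_L2_lemma
    {β : Type*} [MeasurableSpace β] (ν : Measure β) [IsProbabilityMeasure ν]
    (C : ℝ) (hC : 0 ≤ C) (κ : Kernel β ℝ) [IsMarkovKernel κ]
    (hκ : ∀ b : β, ∀ x y : ℝ, x ≤ y → κ b (Ioo x y) ≤ ENNReal.ofReal (C * (y - x)))
    (h g : β → ℝ) (hh : Measurable h) (hg : Measurable g)
    (hL2 : MemLp (fun b => g b - h b) 2 ν) :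
    (ν.compProd κ) {p : β × ℝ | h p.1 < p.2 ∧ p.2 < g p.1} ≤
        ENNReal.ofReal (C * ∫ b, |h b - g b| ∂ν) ∧
      C * ∫ b, |h b - g b| ∂ν ≤ C * (∫ b, (h b - g b) ^ 2 ∂ν) ^ (1/2 : ℝ) := by
  have hL2_neg : MemLp (fun b => h b - g b) 2 ν := by
    simpa only [Pi.neg_def, neg_sub] using hL2.neg
  have hint : Integrable (fun b => |h b - g b|) ν := (hL2_neg.integrable one_le_two).abs
  refine ⟨?_, mul_le_mul_of_nonneg_left (integral_abs_le_integral_sq_rpow_half hL2_neg) hC⟩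
  calc (ν.compProd κ) {p : β × ℝ | h p.1 < p.2 ∧ p.2 < g p.1}
      ≤ ∫⁻ b, ENNReal.ofReal (C * |h b - g b|) ∂ν :=
        compProd_setOf_between_le_lintegral ν hκ hh hg
    _ = ENNReal.ofReal (C * ∫ b, |h b - g b| ∂ν) := by
        rw [← integral_const_mul, ofReal_integral_eq_lintegral_ofReal (hint.const_mul C)
          (Filter.Eventually.of_forall fun b => mul_nonneg hC (abs_nonneg _))]
end

section
/- Let ν be a probability measure on a measurable space β, let C ≥ 0, and let κ be a Markov kernel from β to ℝ such that for every b ∈ β and all reals x ≤ y, κ(b)(Ioo x y) ≤ C·(y − x) (i.e., each κ(b) has a Lebesgue density bounded by C and no point masses). Let h, g : β → ℝ be measurable with g − h square-integrable with respect to ν. Then ∫ ((κ(b)(Ioi (h(b)))).toReal − (κ(b)(Ioi (g(b)))).toReal)² dν(b) ≤ C²·∫ (h(b) − g(b))² dν(b). -/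
open MeasureTheory ProbabilityTheory Set Filter Topology

/-
The map `x ↦ P(A > x | B = b)` is `C`-Lipschitz for every `b`: the difference of two values is
the conditional mass of a half-open interval, which lies inside open intervals of length
arbitrarily close to its own. Squaring and integrating against `ν` gives the bound.
-/

section TailLipschitz

variable {μ : Measure ℝ} {C : ℝ}

theorem measure_Ioc_le_of_forall_measure_Ioo_le
    (hμ : ∀ x y : ℝ, x ≤ y → μ (Ioo x y) ≤ ENNReal.ofReal (C * (y - x)))
    {x y : ℝ} (hxy : x ≤ y) :
    μ (Ioc x y) ≤ ENNReal.ofReal (C * (y - x)) := by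
  have hlim : Tendsto (fun ε : ℝ => ENNReal.ofReal (C * (y + ε - x))) (𝓝[>] 0)
      (𝓝 (ENNReal.ofReal (C * (y - x)))) := by
    refine (Continuous.tendsto' ?_ 0 _ (by simp)).mono_left nhdsWithin_le_nhds
    exact ENNReal.continuous_ofReal.comp (by fun_prop)
  refine ge_of_tendsto hlim (eventually_nhdsWithin_of_forall fun ε (hε : 0 < ε) => ?_)
  calc μ (Ioc x y) ≤ μ (Ioo x (y + ε)) := measure_mono (Ioc_subset_Ioo_right (by linarith))
    _ ≤ ENNReal.ofReal (C * (y + ε - x)) := hμ x (y + ε) (by linarith)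

theorem abs_measureReal_Ioi_sub_measureReal_Ioi_le [IsFiniteMeasure μ] (hC : 0 ≤ C)
    (hμ : ∀ x y : ℝ, x ≤ y → μ (Ioo x y) ≤ ENNReal.ofReal (C * (y - x))) (x y : ℝ) :
    |μ.real (Ioi x) - μ.real (Ioi y)| ≤ C * |x - y| := by
  wlog hxy : x ≤ y generalizing x y
  · rw [abs_sub_comm, abs_sub_comm x]
    exact this y x (le_of_not_ge hxy)
  rw [← measureReal_sdiff (Ioi_subset_Ioi hxy) measurableSet_Ioi, Ioi_sdiff_Ioi,
    abs_of_nonneg measureReal_nonneg, abs_sub_comm, abs_of_nonneg (sub_nonneg.2 hxy),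
    measureReal_def, ← ENNReal.toReal_ofReal (mul_nonneg hC (sub_nonneg.2 hxy))]
  exact ENNReal.toReal_mono ENNReal.ofReal_ne_top
    (measure_Ioc_le_of_forall_measure_Ioo_le hμ hxy)

end TailLipschitz

theorem conditional_indicator_L2_lemma_general
    {β : Type*} [MeasurableSpace β] (ν : Measure β)
    (C : ℝ) (hC : 0 ≤ C) (κ : Kernel β ℝ) [IsMarkovKernel κ]
    (hκ : ∀ b : β, ∀ x y : ℝ, x ≤ y → κ b (Ioo x y) ≤ ENNReal.ofReal (C * (y - x)))
    (h g : β → ℝ)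
    (hL2 : MemLp (fun b => g b - h b) 2 ν) :
    ∫ b, ((κ b (Ioi (h b))).toReal - (κ b (Ioi (g b))).toReal) ^ 2 ∂ν ≤
      C ^ 2 * ∫ b, (h b - g b) ^ 2 ∂ν := by
  have hpointwise : ∀ b, ((κ b (Ioi (h b))).toReal - (κ b (Ioi (g b))).toReal) ^ 2 ≤
      C ^ 2 * (h b - g b) ^ 2 := fun b => by
    rw [← mul_pow, sq_le_sq, abs_mul, abs_of_nonneg hC]
    exact abs_measureReal_Ioi_sub_measureReal_Ioi_le hC (hκ b) (h b) (g b)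
  have hint : Integrable (fun b => (h b - g b) ^ 2) ν := by
    simpa only [sub_sq_comm (g _)] using hL2.integrable_sq
  rw [← integral_const_mul]
  exact integral_mono_of_nonneg (.of_forall fun b => sq_nonneg _) (hint.const_mul _)
    (.of_forall hpointwise)

/-- conditional indicator L² lemma, Lemma 8 of the appendix: if the
conditional distribution `κ b` of `A` given `B = b` satisfies `κ b (Ioo x y) ≤ C⬝(y - x)`
(density bounded by `C`, no point masses), then
`‖P(A > h(B) | B) - P(A > g(B) | B)‖_{L²(ν)} ≤ C⬝‖h - g‖_{L²(ν)}`. -/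
theorem conditional_indicator_L2_lemma
    {β : Type*} [MeasurableSpace β] (ν : Measure β) [IsProbabilityMeasure ν]
    (C : ℝ) (hC : 0 ≤ C) (κ : Kernel β ℝ) [IsMarkovKernel κ]
    (hκ : ∀ b : β, ∀ x y : ℝ, x ≤ y → κ b (Ioo x y) ≤ ENNReal.ofReal (C * (y - x)))
    (h g : β → ℝ) (hh : Measurable h) (hg : Measurable g)
    (hL2 : MemLp (fun b => g b - h b) 2 ν) :
    ∫ b, ((κ b (Ioi (h b))).toReal - (κ b (Ioi (g b))).toReal) ^ 2 ∂ν ≤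
      C ^ 2 * ∫ b, (h b - g b) ^ 2 ∂ν :=
  conditional_indicator_L2_lemma_general ν C hC κ hκ h g hL2
end

section
/- Let 𝒰 be a set, γ ≥ 0, and let f : ℝ × 𝒰 → ℝ and F : ℝ → ℝ be everywhere positive. Suppose that for all a₁, a₂ ∈ ℝ and all u ∈ 𝒰, exp(−(γ/2)·|a₁ − a₂|) ≤ (f(a₂, u)·F(a₁)) / (f(a₁, u)·F(a₂)) ≤ exp((γ/2)·|a₁ − a₂|). Then for all a₁, a₂ ∈ ℝ and all u, u′ ∈ 𝒰, exp(−γ·|a₁ − a₂|) ≤ (f(a₂, u)·f(a₁, u′)) / (f(a₁, u)·f(a₂, u′)) ≤ exp(γ·|a₁ − a₂|). -/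
/-!
The Rosenbaum odds ratio of `f` at `(a₁, a₂; u, u')` is the marginal odds ratio of `u` from
`a₁` to `a₂` times that of `u'` from `a₂` to `a₁`, because the factors of `F` cancel. Each of
the two lies in `[exp (-(γ/2)|a₁ - a₂|), exp ((γ/2)|a₁ - a₂|)]`, so the product lies in the
interval with exponent `γ|a₁ - a₂|`.
-/

open Real Set

lemma mul_div_mul_eq_mul_div_mul_mul {K : Type*} [Field K] {x y z w s t : K}
    (hs : s ≠ 0) (ht : t ≠ 0) :
    x * z / (y * w) = x * s / (y * t) * (z * t / (w * s)) := by
  rw [div_mul_div_comm, mul_mul_mul_comm x s z t, mul_mul_mul_comm y t w s, mul_comm t s,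
    mul_div_mul_right _ _ (mul_ne_zero hs ht)]

lemma mul_mem_Icc_exp_neg_exp {x y c d : ℝ} (hx : x ∈ Icc (exp (-c)) (exp c))
    (hy : y ∈ Icc (exp (-d)) (exp d)) :
    x * y ∈ Icc (exp (-(c + d))) (exp (c + d)) := by
  rw [neg_add, exp_add, exp_add]
  exact ⟨mul_le_mul hx.1 hy.1 (exp_pos _).le ((exp_pos _).le.trans hx.1),
    mul_le_mul hx.2 hy.2 ((exp_pos _).le.trans hy.1) (exp_pos _).le⟩

theorem marginal_half_gamma_implies_rosenbaum_gamma_general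
    {𝒰 : Type*} (γ : ℝ)
    (f : ℝ → 𝒰 → ℝ) (F : ℝ → ℝ)
    (hF : ∀ a, 0 < F a)
    (hmodel : ∀ (a₁ a₂ : ℝ) (u : 𝒰),
      Real.exp (-(γ / 2 * |a₁ - a₂|)) ≤ f a₂ u * F a₁ / (f a₁ u * F a₂) ∧
      f a₂ u * F a₁ / (f a₁ u * F a₂) ≤ Real.exp (γ / 2 * |a₁ - a₂|)) :
    ∀ (a₁ a₂ : ℝ) (u u' : 𝒰),
      Real.exp (-(γ * |a₁ - a₂|)) ≤ f a₂ u * f a₁ u' / (f a₁ u * f a₂ u') ∧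
      f a₂ u * f a₁ u' / (f a₁ u * f a₂ u') ≤ Real.exp (γ * |a₁ - a₂|) := by
  intro a₁ a₂ u u'
  have hu' := hmodel a₂ a₁ u'
  rw [abs_sub_comm a₂ a₁] at hu'
  rw [mul_div_mul_eq_mul_div_mul_mul (hF a₁).ne' (hF a₂).ne',
    show γ * |a₁ - a₂| = γ / 2 * |a₁ - a₂| + γ / 2 * |a₁ - a₂| by ring]
  exact mul_mem_Icc_exp_neg_exp (hmodel a₁ a₂ u) hu'

/-- first implication of Lemma 9: if the marginal sensitivity model holds
at parameter `γ/2` — the odds ratio of the latent density `f (·, u)` against the observed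
density `F` at any two dose levels is bounded by `exp (±(γ/2)|a₁ - a₂|)` — then the
Rosenbaum-type model holds at parameter `γ`: the odds ratio of the latent density at any
two dose levels and any two confounder values is bounded by `exp (±γ|a₁ - a₂|)`. -/
theorem marginal_half_gamma_implies_rosenbaum_gamma
    {𝒰 : Type*} (γ : ℝ) (hγ : 0 ≤ γ)
    (f : ℝ → 𝒰 → ℝ) (F : ℝ → ℝ)
    (hf : ∀ a u, 0 < f a u) (hF : ∀ a, 0 < F a)
    (hmodel : ∀ (a₁ a₂ : ℝ) (u : 𝒰),
      Real.exp (-(γ / 2 * |a₁ - a₂|)) ≤ f a₂ u * F a₁ / (f a₁ u * F a₂) ∧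
      f a₂ u * F a₁ / (f a₁ u * F a₂) ≤ Real.exp (γ / 2 * |a₁ - a₂|)) :
    ∀ (a₁ a₂ : ℝ) (u u' : 𝒰),
      Real.exp (-(γ * |a₁ - a₂|)) ≤ f a₂ u * f a₁ u' / (f a₁ u * f a₂ u') ∧
      f a₂ u * f a₁ u' / (f a₁ u * f a₂ u') ≤ Real.exp (γ * |a₁ - a₂|) :=
  marginal_half_gamma_implies_rosenbaum_gamma_general γ f F hF hmodel
end

section
/- Let (𝒰, μ) be a probability space, γ ≥ 0, and let f : ℝ × 𝒰 → ℝ be everywhere positive, with u ↦ f(a, u) measurable and μ-integrable for each a ∈ ℝ. Define F(a) := ∫ f(a, u′) dμ(u′), and assume F(a) > 0 for all a. Suppose that for all a₁, a₂ ∈ ℝ and all u, u′ ∈ 𝒰, exp(−γ·|a₁ − a₂|) ≤ (f(a₂, u)·f(a₁, u′)) / (f(a₁, u)·f(a₂, u′)) ≤ exp(γ·|a₁ − a₂|). Then for all a₁, a₂ ∈ ℝ and all u ∈ 𝒰, exp(−γ·|a₁ − a₂|) ≤ (f(a₂, u)·F(a₁)) / (f(a₁, u)·F(a₂)) ≤ exp(γ·|a₁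 − a₂|). -/
/-! The marginal ratio `f a₂ u * F a₁ / (f a₁ u * F a₂)` is the ratio of the `u'`-integrals
of the numerator and denominator of the Rosenbaum ratio, and a ratio of integrals of
positive functions lies between the bounds of the pointwise ratio. -/

open MeasureTheory Set

theorem integral_div_integral_mem_Icc {α : Type*} [MeasurableSpace α] {μ : Measure α}
    {g h : α → ℝ} {m M : ℝ} (hg : Integrable g μ) (hh : Integrable h μ)
    (hh_pos : ∀ x, 0 < h x) (hint_pos : 0 < ∫ x, h x ∂μ)
    (hbound : ∀ x, g x / h x ∈ Icc m M) :
    (∫ x, g x ∂μ) / (∫ x, h x ∂μ) ∈ Icc m M := by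
  have hlo : ∀ x, m * h x ≤ g x := fun x => (le_div_iff₀ (hh_pos x)).1 (hbound x).1
  have hup : ∀ x, g x ≤ M * h x := fun x => (div_le_iff₀ (hh_pos x)).1 (hbound x).2
  refine ⟨(le_div_iff₀ hint_pos).2 ?_, (div_le_iff₀ hint_pos).2 ?_⟩
  · rw [← integral_const_mul]
    exact integral_mono (hh.const_mul m) hg hlo
  · rw [← integral_const_mul]
    exact integral_mono hg (hh.const_mul M) hup

theorem rosenbaum_gamma_implies_marginal_gamma_general
    {𝒰 : Type*} [MeasurableSpace 𝒰] (μ : Measure 𝒰)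
    (γ : ℝ)
    (f : ℝ → 𝒰 → ℝ)
    (hf : ∀ a u, 0 < f a u)
    (hint : ∀ a, Integrable (f a) μ)
    (F : ℝ → ℝ) (hF : ∀ a, F a = ∫ u', f a u' ∂μ)
    (hFpos : ∀ a, 0 < F a)
    (hmodel : ∀ (a₁ a₂ : ℝ) (u u' : 𝒰),
      Real.exp (-(γ * |a₁ - a₂|)) ≤ f a₂ u * f a₁ u' / (f a₁ u * f a₂ u') ∧
      f a₂ u * f a₁ u' / (f a₁ u * f a₂ u') ≤ Real.exp (γ * |a₁ - a₂|)) :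
    ∀ (a₁ a₂ : ℝ) (u : 𝒰),
      Real.exp (-(γ * |a₁ - a₂|)) ≤ f a₂ u * F a₁ / (f a₁ u * F a₂) ∧
      f a₂ u * F a₁ / (f a₁ u * F a₂) ≤ Real.exp (γ * |a₁ - a₂|) := by
  intro a₁ a₂ u
  have hmarginal : ∀ a c, ∫ u', c * f a u' ∂μ = c * F a := fun a c => by
    rw [integral_const_mul, hF]
  have key := integral_div_integral_mem_Icc ((hint a₁).const_mul (f a₂ u))
    ((hint a₂).const_mul (f a₁ u)) (fun u' => mul_pos (hf a₁ u) (hf a₂ u'))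
    (by rw [hmarginal]; exact mul_pos (hf a₁ u) (hFpos a₂)) (fun u' => hmodel a₁ a₂ u u')
  rwa [hmarginal, hmarginal] at key

/-- second implication of Lemma 9: if the Rosenbaum-type sensitivity model
holds at parameter `γ` — the odds ratio of the latent density `f` at any two dose levels
and any two confounder values is bounded by `exp (±γ|a₁ - a₂|)` — then the marginal
sensitivity model holds at the same parameter `γ` with respect to the marginalized
density `F a = ∫ f (a, u') dμ(u')`. -/
theorem rosenbaum_gamma_implies_marginal_gamma
    {𝒰 : Type*} [MeasurableSpace 𝒰] (μ : Measure 𝒰) [IsProbabilityMeasure μ]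
    (γ : ℝ) (hγ : 0 ≤ γ)
    (f : ℝ → 𝒰 → ℝ)
    (hf : ∀ a u, 0 < f a u)
    (hmeas : ∀ a, Measurable (f a))
    (hint : ∀ a, Integrable (f a) μ)
    (F : ℝ → ℝ) (hF : ∀ a, F a = ∫ u', f a u' ∂μ)
    (hFpos : ∀ a, 0 < F a)
    (hmodel : ∀ (a₁ a₂ : ℝ) (u u' : 𝒰),
      Real.exp (-(γ * |a₁ - a₂|)) ≤ f a₂ u * f a₁ u' / (f a₁ u * f a₂ u') ∧
      f a₂ u * f a₁ u' / (f a₁ u * f a₂ u') ≤ Real.exp (γ * |a₁ - a₂|)) :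
    ∀ (a₁ a₂ : ℝ) (u : 𝒰),
      Real.exp (-(γ * |a₁ - a₂|)) ≤ f a₂ u * F a₁ / (f a₁ u * F a₂) ∧
      f a₂ u * F a₁ / (f a₁ u * F a₂) ≤ Real.exp (γ * |a₁ - a₂|) :=
  rosenbaum_gamma_implies_marginal_gamma_general μ γ f hf hint F hF hFpos hmodel
end

section
/- Let Y be an integrable real random variable on a probability space (Ω, ℱ, P) whose law has a density with respect to Lebesgue measure bounded by a constant C (in particular, no point masses), and let m ∈ ℝ satisfy P(Y ≤ m) = 1/2. Then for every t ∈ ℝ, 0 ≤ E[|Y − t|] − E[|Y − m|] ≤ C·(t − m)². -/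
open MeasureTheory Set

private lemma mad_aux {Ω : Type*} [MeasurableSpace Ω] (P : Measure Ω) [IsProbabilityMeasure P]
    (Y : Ω → ℝ) (hYm : Measurable Y) (hY : Integrable Y P)
    (C : ℝ) (hC : 0 ≤ C)
    (hdens : ∀ x y : ℝ, x ≤ y →
      P {ω | x < Y ω ∧ Y ω < y} ≤ ENNReal.ofReal (C * (y - x)))
    (m : ℝ) (hm : P {ω | Y ω ≤ m} = 1/2)
    (t : ℝ) (hmt : m < t) :
    0 ≤ (∫ ω, |Y ω - t| ∂P) - ∫ ω, |Y ω - m| ∂P ∧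
      (∫ ω, |Y ω - t| ∂P) - (∫ ω, |Y ω - m| ∂P) ≤ C * (t - m) ^ 2 := by
  set L := t - m with hL
  have hL0 : 0 < L := by simp only [hL]; linarith
  set f : Ω → ℝ := fun ω => max 0 (min (t - Y ω) L) with hf
  have hf_nonneg : ∀ ω, 0 ≤ f ω := fun ω => le_max_left _ _
  have hf_le : ∀ ω, f ω ≤ L := fun ω => max_le hL0.le (min_le_right _ _)
  have hf_meas : Measurable f :=
    measurable_const.max ((measurable_const.sub hYm).min measurable_const)
  have hf_int : Integrable f P := by
    refine (integrable_const L).mono' hf_meas.aestronglyMeasurable (ae_of_all _ fun ω => ?_)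
    rw [Real.norm_eq_abs, abs_of_nonneg (hf_nonneg ω)]; exact hf_le ω
  have hpt : ∀ ω, |Y ω - t| - |Y ω - m| = 2 * f ω - L := by
    intro ω
    simp only [hf]
    rcases le_total (t - Y ω) L with h | h
    · rw [min_eq_left h]
      rcases le_total 0 (t - Y ω) with h' | h'
      · rw [max_eq_right h', abs_of_nonpos (by linarith : Y ω - t ≤ 0),
          abs_of_nonneg (by linarith : (0:ℝ) ≤ Y ω - m)]
        ring
      · rw [max_eq_left (by linarith), abs_of_nonneg (by linarith : (0:ℝ) ≤ Y ω - t),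
          abs_of_nonneg (by linarith : (0:ℝ) ≤ Y ω - m)]
        linarith
    · rw [min_eq_right h, max_eq_right hL0.le,
        abs_of_nonpos (by linarith : Y ω - t ≤ 0),
        abs_of_nonpos (by linarith : Y ω - m ≤ 0)]
      linarith
  have hint_t : Integrable (fun ω => |Y ω - t|) P := (hY.sub (integrable_const t)).abs
  have hint_m : Integrable (fun ω => |Y ω - m|) P := (hY.sub (integrable_const m)).abs
  have hdiff : (∫ ω, |Y ω - t| ∂P) - (∫ ω, |Y ω - m| ∂P) = 2 * (∫ ω, f ω ∂P) - L := by
    rw [← integral_sub hint_t hint_m]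
    have heq : (fun ω => |Y ω - t| - |Y ω - m|) = fun ω => 2 * f ω - L := funext hpt
    rw [heq, integral_sub (hf_int.const_mul 2) (integrable_const L), integral_const_mul,
      integral_const]
    simp
  have key : ∫ ω, f ω ∂P = (∫⁻ s in Ioi (0:ℝ), P {a | s < f a}).toReal := by
    rw [integral_eq_lintegral_of_nonneg_ae (ae_of_all _ hf_nonneg) hf_meas.aestronglyMeasurable,
      lintegral_eq_lintegral_meas_lt P (ae_of_all _ hf_nonneg) hf_meas.aemeasurable]
  set I := ∫⁻ s in Ioi (0:ℝ), P {a | s < f a} with hI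
  have hlow : ENNReal.ofReal L * (1/2) ≤ I := by
    have step1 : ENNReal.ofReal L * (1/2) = ∫⁻ _ in Ioo (0:ℝ) L, ((1:ENNReal)/2) ∂volume := by
      rw [setLIntegral_const, Real.volume_Ioo]
      rw [mul_comm]
      norm_num
    rw [step1]
    refine le_trans (setLIntegral_mono' measurableSet_Ioo fun s hs => ?_)
      (lintegral_mono_set Ioo_subset_Ioi_self)
    rw [← hm]
    refine measure_mono fun a ha => ?_
    have h1 : s < min (t - Y a) L := by
      refine lt_min ?_ hs.2
      simp only [mem_setOf_eq] at ha
      have := hs.2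
      simp only [hL] at this ⊢
      linarith
    exact lt_of_lt_of_le h1 (le_max_right _ _)
  have hbd : ∀ s ∈ Ioi (0:ℝ), P {a | s < f a} ≤
      (Ioo (0:ℝ) L).indicator (fun s => 1/2 + ENNReal.ofReal (C * (L - s))) s := by
    intro s hs
    rw [mem_Ioi] at hs
    by_cases hsL : s < L
    · rw [indicator_of_mem (show s ∈ Ioo (0:ℝ) L from ⟨hs, hsL⟩)]
      have hsub : {a | s < f a} ⊆ {ω | Y ω ≤ m} ∪ {ω | m < Y ω ∧ Y ω < t - s} := by
        intro a ha
        simp only [mem_setOf_eq, hf] at ha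
        have h1 : s < min (t - Y a) L := by
          rcases lt_max_iff.mp ha with h | h
          · linarith
          · exact h
        have h2 : Y a < t - s := by
          have := (lt_min_iff.mp h1).1; linarith
        rcases le_or_gt (Y a) m with h | h
        · exact Or.inl h
        · exact Or.inr ⟨h, h2⟩
      refine le_trans (measure_mono hsub) (le_trans (measure_union_le _ _) ?_)
      rw [hm]
      gcongr
      have hd := hdens m (t - s) (by simp only [hL] at hsL; linarith)
      have : t - s - m = L - s := by simp only [hL]; ring
      rwa [this] at hd
    · rw [indicator_of_notMem (fun hmem => hsL hmem.2)]
      have hempty : {a | s < f a} = (∅ : Set Ω) := by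
        ext a
        simp only [mem_setOf_eq, mem_empty_iff_false, iff_false, not_lt]
        exact le_trans (hf_le a) (not_lt.mp hsL)
      simp [hempty]
  have hupp : I ≤ ENNReal.ofReal L * (1/2) + ENNReal.ofReal (C * L ^ 2 / 2) := by
    have step := setLIntegral_mono' (μ := volume) measurableSet_Ioi hbd
    rw [lintegral_indicator measurableSet_Ioo, Measure.restrict_restrict measurableSet_Ioo,
      inter_eq_left.mpr Ioo_subset_Ioi_self] at step
    refine le_trans step ?_
    rw [lintegral_add_left measurable_const]
    have hA : ∫⁻ _ in Ioo (0:ℝ) L, ((1:ENNReal)/2) ∂volume = ENNReal.ofReal L * (1/2) := by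
      rw [setLIntegral_const, Real.volume_Ioo]
      rw [mul_comm]
      norm_num
    have hIntOn : IntegrableOn (fun s => C * (L - s)) (Ioo (0:ℝ) L) volume := by
      refine ((continuous_const.mul (continuous_const.sub continuous_id)).continuousOn.integrableOn_compact
        isCompact_Icc).mono_set Ioo_subset_Icc_self
    have hnn : 0 ≤ᵐ[volume.restrict (Ioo (0:ℝ) L)] fun s => C * (L - s) := by
      refine (ae_restrict_iff' measurableSet_Ioo).mpr (ae_of_all _ fun s hs => ?_)
      exact mul_nonneg hC (by linarith [hs.2])
    have hB : ∫⁻ s in Ioo (0:ℝ) L, ENNReal.ofReal (C * (L - s)) ∂volume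
        = ENNReal.ofReal (C * L ^ 2 / 2) := by
      rw [← ofReal_integral_eq_lintegral_ofReal hIntOn hnn]
      congr 1
      rw [← integral_Ioc_eq_integral_Ioo, ← intervalIntegral.integral_of_le hL0.le]
      rw [intervalIntegral.integral_const_mul,
        intervalIntegral.integral_sub (intervalIntegrable_const (c := L)) intervalIntegral.intervalIntegrable_id,
        intervalIntegral.integral_const, integral_id]
      simp only [smul_eq_mul, sub_zero]
      ring
    rw [hA, hB]
  have hAne : ENNReal.ofReal L * (1/2) ≠ ⊤ := ENNReal.mul_ne_top ENNReal.ofReal_ne_top (by norm_num)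
  have hSne : ENNReal.ofReal L * (1/2) + ENNReal.ofReal (C * L ^ 2 / 2) ≠ ⊤ :=
    ENNReal.add_ne_top.mpr ⟨hAne, ENNReal.ofReal_ne_top⟩
  have hItop : I ≠ ⊤ := (lt_of_le_of_lt hupp (lt_top_iff_ne_top.mpr hSne)).ne
  have htr1 : (ENNReal.ofReal L * (1/2)).toReal = L / 2 := by
    rw [ENNReal.toReal_mul, ENNReal.toReal_ofReal hL0.le]
    norm_num
    ring
  have h1 : L / 2 ≤ ∫ ω, f ω ∂P := by
    rw [key]
    have := ENNReal.toReal_mono hItop hlow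
    rwa [htr1] at this
  have h2 : ∫ ω, f ω ∂P ≤ L / 2 + C * L ^ 2 / 2 := by
    rw [key]
    have := ENNReal.toReal_mono hSne hupp
    refine le_trans this ?_
    rw [ENNReal.toReal_add hAne ENNReal.ofReal_ne_top, htr1,
      ENNReal.toReal_ofReal (div_nonneg (mul_nonneg hC (sq_nonneg L)) (by norm_num))]
  constructor
  · rw [hdiff]; linarith
  · rw [hdiff]
    have : C * (t - m) ^ 2 = C * L ^ 2 := by rw [hL]
    rw [this]; linarith

/-- second-order stability of the mean absolute deviation about the
median, term T₂ in Theorem 1: if the law of the integrable random variable `Y` has a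
Lebesgue density bounded by `C` (so no point masses) and `m` is a median of `Y`, then
for every `t`, `0 ≤ E|Y - t| - E|Y - m| ≤ C⬝(t - m)²`. -/
theorem median_absolute_deviation_second_order
    {Ω : Type*} [MeasurableSpace Ω] (P : Measure Ω) [IsProbabilityMeasure P]
    (Y : Ω → ℝ) (hYm : Measurable Y) (hY : Integrable Y P)
    (C : ℝ) (hC : 0 ≤ C)
    (hdens : ∀ x y : ℝ, x ≤ y →
      P {ω | x < Y ω ∧ Y ω < y} ≤ ENNReal.ofReal (C * (y - x)))
    (m : ℝ) (hm : P {ω | Y ω ≤ m} = 1/2) :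
    ∀ t : ℝ,
      0 ≤ (∫ ω, |Y ω - t| ∂P) - ∫ ω, |Y ω - m| ∂P ∧
      (∫ ω, |Y ω - t| ∂P) - (∫ ω, |Y ω - m| ∂P) ≤ C * (t - m) ^ 2 := by
  intro t
  rcases lt_trichotomy m t with hmt | heq | htm
  · exact mad_aux P Y hYm hY C hC hdens m hm t hmt
  · subst heq
    simp
  · -- t < m : apply the aux lemma to -Y
    -- no atoms
    have hatom : P {ω | Y ω = m} = 0 := by
      have hb : ∀ ε : ℝ, 0 < ε → P {ω | Y ω = m} ≤ ENNReal.ofReal (C * (2 * ε)) := by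
        intro ε hε
        have h2 := hdens (m - ε) (m + ε) (by linarith)
        rw [show m + ε - (m - ε) = 2 * ε by ring] at h2
        refine le_trans (measure_mono fun ω hω => ?_) h2
        simp only [mem_setOf_eq] at hω ⊢
        constructor <;> (rw [hω]; linarith)
      refine le_antisymm ?_ zero_le
      by_contra hpos
      push_neg at hpos
      have hfin : P {ω | Y ω = m} ≠ ⊤ := measure_ne_top _ _
      have hrpos : 0 < (P {ω | Y ω = m}).toReal := ENNReal.toReal_pos hpos.ne' hfin
      rcases eq_or_lt_of_le hC with hC0 | hC0
      · have := hb 1 one_pos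
        rw [← hC0] at this
        simp at this
        exact absurd this (ne_of_gt hpos)
      · set p := (P {ω | Y ω = m}).toReal with hp
        have hbp := hb (p / (4 * C)) (by positivity)
        have harith : C * (2 * (p / (4 * C))) = p / 2 := by field_simp; ring
        rw [harith] at hbp
        have : (P {ω | Y ω = m}).toReal ≤ p / 2 := by
          have := ENNReal.toReal_mono ENNReal.ofReal_ne_top hbp
          rwa [ENNReal.toReal_ofReal (by positivity)] at this
        rw [← hp] at this
        linarith
    have hms : MeasurableSet {ω | Y ω = m} := hYm (measurableSet_singleton m)
    have hmlt : MeasurableSet {ω | Y ω < m} := hYm measurableSet_Iio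
    have hlt : P {ω | Y ω < m} = 1/2 := by
      have hdisj : Disjoint {ω | Y ω < m} {ω | Y ω = m} := by
        rw [Set.disjoint_left]
        intro ω h1 h2
        simp only [mem_setOf_eq] at h1 h2
        exact absurd h2 (ne_of_lt h1)
      have hmeq : {ω | Y ω ≤ m} = {ω | Y ω < m} ∪ {ω | Y ω = m} := by
        ext ω; simp [le_iff_lt_or_eq]
      rw [hmeq, measure_union hdisj hms, hatom, add_zero] at hm
      exact hm
    have hm' : P {ω | -Y ω ≤ -m} = 1/2 := by
      have hset : {ω | -Y ω ≤ -m} = {ω | Y ω < m}ᶜ := by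
        ext ω; simp [not_lt]
      rw [hset, measure_compl hmlt (measure_ne_top _ _), hlt, measure_univ]
      rw [one_div, ENNReal.one_sub_inv_two]
    have hdens' : ∀ x y : ℝ, x ≤ y →
        P {ω | x < -Y ω ∧ -Y ω < y} ≤ ENNReal.ofReal (C * (y - x)) := by
      intro x y hxy
      have hset : {ω | x < -Y ω ∧ -Y ω < y} = {ω | -y < Y ω ∧ Y ω < -x} := by
        ext ω; simp only [mem_setOf_eq]; constructor <;> intro h <;> constructor <;> linarith [h.1, h.2]
      rw [hset]
      have := hdens (-y) (-x) (by linarith)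
      rwa [show -x - -y = y - x by ring] at this
    have haux := mad_aux P (fun ω => -Y ω) hYm.neg hY.neg C hC hdens' (-m) hm' (-t)
      (by linarith)
    have he1 : (∫ ω, |-Y ω - -t| ∂P) = ∫ ω, |Y ω - t| ∂P := by
      congr 1; funext ω; rw [show -Y ω - -t = -(Y ω - t) by ring, abs_neg]
    have he2 : (∫ ω, |-Y ω - -m| ∂P) = ∫ ω, |Y ω - m| ∂P := by
      congr 1; funext ω; rw [show -Y ω - -m = -(Y ω - m) by ring, abs_neg]
    have he3 : C * (-t - -m) ^ 2 = C * (t - m) ^ 2 := by ring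
    rw [he1, he2, he3] at haux
    exact haux
end
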